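/- arXiv:2302.12355 — 6 statements merged into one kernel-verified Lean document; each statement's English description precedes it below -/
import Mathlib

section
/- If γ^OPT ≤ H·(1 - γ/(Δ+2))^M for reals 0 < γ ≤ 1, integers H ≥ 1, Δ ≥ 0, OPT ≥ 0, M ≥ 0, then M ≤ ((Δ+2)/γ)·ln H - (ln γ·(Δ+2)/γ)·OPT; in particular, taking γ = 1/e gives M ≤ e(Δ+2)(ln H + OPT). -/
/-- Weight-telescoping inequality for the biased weighted majority-vote algorithm:
if `γ^OPT ≤ H * (1 - γ/(Δ+2))^M` for `0 < γ ≤ 1`, then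
`M ≤ ((Δ+2)/γ) ln H - (ln γ (Δ+2)/γ) OPT`; in particular for `γ = 1/e` we get
`M ≤ e (Δ+2) (ln H + OPT)`. -/
theorem weighted_majority_mistake_bound (γ : ℝ) (hγ0 : 0 < γ) (hγ1 : γ ≤ 1)
    (H Δ OPT M : ℕ) (hH : 1 ≤ H)
    (h : γ ^ OPT ≤ (H : ℝ) * (1 - γ / ((Δ : ℝ) + 2)) ^ M) :
    (M : ℝ) ≤ (((Δ : ℝ) + 2) / γ) * Real.log (H : ℝ)
        - (Real.log γ * ((Δ : ℝ) + 2) / γ) * (OPT : ℝ) ∧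
      (γ = Real.exp (-1) →
        (M : ℝ) ≤ Real.exp 1 * ((Δ : ℝ) + 2) * (Real.log (H : ℝ) + (OPT : ℝ))) := by
  set D : ℝ := (Δ : ℝ) + 2 with hD
  have hD0 : (0 : ℝ) < D := by positivity
  have hx0 : 0 < γ / D := by positivity
  have hx1 : γ / D < 1 := by
    rw [div_lt_one hD0]; nlinarith
  have h1x : 0 < 1 - γ / D := by linarith
  have hH0 : (0 : ℝ) < (H : ℝ) := by exact_mod_cast hH
  -- take logs
  have hlog : (OPT : ℝ) * Real.log γ ≤ Real.log H + (M : ℝ) * Real.log (1 - γ / D) := by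
    have := Real.log_le_log (by positivity : (0:ℝ) < γ ^ OPT) h
    rwa [Real.log_pow, Real.log_mul (ne_of_gt hH0) (by positivity), Real.log_pow] at this
  have hlb : Real.log (1 - γ / D) ≤ -(γ / D) := by
    have := Real.log_le_sub_one_of_pos h1x
    linarith
  have hM0 : (0 : ℝ) ≤ (M : ℝ) := Nat.cast_nonneg M
  have key : (M : ℝ) * (γ / D) ≤ Real.log H - (OPT : ℝ) * Real.log γ := by
    have h2 : (M : ℝ) * Real.log (1 - γ / D) ≤ (M : ℝ) * (-(γ / D)) :=
      mul_le_mul_of_nonneg_left hlb hM0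
    linarith
  have main : (M : ℝ) ≤ (D / γ) * Real.log H - (Real.log γ * D / γ) * (OPT : ℝ) := by
    have h3 := mul_le_mul_of_nonneg_left key (le_of_lt (by positivity : (0:ℝ) < D / γ))
    have h4 : (D / γ) * ((M : ℝ) * (γ / D)) = (M : ℝ) := by
      field_simp
    rw [h4] at h3
    calc (M : ℝ) ≤ (D / γ) * (Real.log H - (OPT : ℝ) * Real.log γ) := h3
      _ = (D / γ) * Real.log H - (Real.log γ * D / γ) * (OPT : ℝ) := by ring
  refine ⟨main, fun hγe => ?_⟩
  have hlogγ : Real.log γ = -1 := by rw [hγe, Real.log_exp]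
  have hγinv : D / γ = Real.exp 1 * D := by
    rw [hγe, Real.exp_neg, div_inv_eq_mul, mul_comm]
  rw [hlogγ, hγinv] at main
  calc (M : ℝ) ≤ Real.exp 1 * D * Real.log H - (-1 * D / γ) * (OPT : ℝ) := main
    _ = Real.exp 1 * D * Real.log H + (D / γ) * (OPT : ℝ) := by ring
    _ = Real.exp 1 * D * (Real.log H + (OPT : ℝ)) := by rw [hγinv]; ring
end

section
/- In a star graph with center x₀ and Δ ≥ 2 leaves x₁,…,x_Δ, with hypothesis class H = {h¹,…,h^Δ} where hⁱ labels xᵢ positive and all other nodes negative, for every sequence of deterministic classifiers (h_t) there exists a sequence of strategic agents (u_t, y_t) of length T such that the learner errs on every round (T mistakes total) while at each round at most one expert in H errs under its own best response; consequently OPT ≤ T/Δ and the learner makes at least Δ·OPT mistakes. -/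
/-- Closed-neighborhood relation in the star graph on `Fin (Δ+1)` with center `0`:
`v` is in the closed neighborhood of `u` iff `u = v`, or one of them is the center. -/
def starNbr (Δ : ℕ) (u v : Fin (Δ + 1)) : Bool :=
  u == v || u == 0 || v == 0

/-- Under a deterministic classifier `h`, an agent starting at `u` ends up
classified positive iff some node of its closed neighborhood is labeled positive. -/
def starOutcome (Δ : ℕ) (h : Fin (Δ + 1) → Bool) (u : Fin (Δ + 1)) : Bool :=
  decide (∃ v, starNbr Δ u v = true ∧ h v = true)

/-- Expert `hⁱ` labels only the leaf `i.succ` positive; its outcome on an agent at `u`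
is positive iff the agent can reach that leaf in one hop. -/
def starExpertOutcome (Δ : ℕ) (i : Fin Δ) (u : Fin (Δ + 1)) : Bool :=
  starNbr Δ u i.succ

lemma starOutcome_leaf (Δ : ℕ) (h : Fin (Δ + 1) → Bool) (j : Fin Δ) :
    starOutcome Δ h j.succ = (h j.succ || h 0) := by
  unfold starOutcome starNbr
  cases hj : h j.succ with
  | true =>
    simp only [Bool.true_or]
    exact decide_eq_true ⟨j.succ, by simp, hj⟩
  | false =>
    cases h0 : h 0 with
    | true =>
      simp only [Bool.or_true]
      exact decide_eq_true ⟨0, by simp, h0⟩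
    | false =>
      simp only [Bool.or_false]
      apply decide_eq_false
      rintro ⟨v, hv, hvt⟩
      simp only [Bool.or_eq_true, beq_iff_eq] at hv
      have hne : (j.succ : Fin (Δ + 1)) ≠ 0 := Fin.succ_ne_zero j
      rcases hv with (rfl | h1) | rfl
      · exact absurd hvt (by simp [hj])
      · exact hne h1
      · exact absurd hvt (by simp [h0])

lemma starOutcome_center (Δ : ℕ) (h : Fin (Δ + 1) → Bool)
    (hall : ∀ v, h v = false) : starOutcome Δ h 0 = false := by
  unfold starOutcome
  apply decide_eq_false
  rintro ⟨v, -, hvt⟩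
  simp [hall v] at hvt

lemma starExpert_leaf (Δ : ℕ) (i j : Fin Δ) :
    starExpertOutcome Δ i j.succ = decide (i = j) := by
  unfold starExpertOutcome starNbr
  rcases eq_or_ne i j with rfl | hne
  · simp
  · simp [Fin.succ_ne_zero, hne, (Fin.succ_inj.not.2 (Ne.symm hne) : ¬ j.succ = i.succ)]

lemma starExpert_center (Δ : ℕ) (i : Fin Δ) :
    starExpertOutcome Δ i 0 = true := by
  simp [starExpertOutcome, starNbr]

/-- In the star graph with `Δ ≥ 2` leaves and experts `h¹, …, h^Δ` (where `hⁱ` labels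
only leaf `i` positive), for every sequence of deterministic classifiers there is a
sequence of strategic agents on which the learner errs at every round while at most
one expert errs per round; consequently some expert makes at most `T/Δ` errors,
i.e. the learner makes at least `Δ · OPT` mistakes. -/
theorem deterministic_lower_bound (Δ : ℕ) (hΔ : 2 ≤ Δ) (T : ℕ)
    (hs : Fin T → Fin (Δ + 1) → Bool) :
    ∃ (u : Fin T → Fin (Δ + 1)) (y : Fin T → Bool),
      (∀ t, starOutcome Δ (hs t) (u t) ≠ y t) ∧
      (∀ t, ((Finset.univ : Finset (Fin Δ)).filter
          (fun i => starExpertOutcome Δ i (u t) ≠ y t)).card ≤ 1) ∧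
      (∃ i : Fin Δ,
        Δ * ((Finset.univ : Finset (Fin T)).filter
          (fun t => starExpertOutcome Δ i (u t) ≠ y t)).card ≤ T) := by
  classical
  -- adversary choice per round
  set u : Fin T → Fin (Δ + 1) := fun t =>
    if hex : ∃ j : Fin Δ, (hs t j.succ || hs t 0) = true then hex.choose.succ else 0 with hu
  set y : Fin T → Bool := fun t =>
    if _ : ∃ j : Fin Δ, (hs t j.succ || hs t 0) = true then false else true with hy
  have hΔpos : 0 < Δ := by omega
  refine ⟨u, y, ?_, ?_, ?_⟩
  · intro t
    by_cases hex : ∃ j : Fin Δ, (hs t j.succ || hs t 0) = true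
    · simp only [hu, hy, dif_pos hex]
      rw [starOutcome_leaf, hex.choose_spec]
      simp
    · simp only [hu, hy, dif_neg hex]
      push_neg at hex
      have hall : ∀ v, hs t v = false := by
        intro v
        induction v using Fin.cases with
        | zero =>
          have := hex ⟨0, hΔpos⟩
          simp only [ne_eq, Bool.or_eq_true, not_or] at this
          simpa using this.2
        | succ j =>
          have := hex j
          simp only [ne_eq, Bool.or_eq_true, not_or] at this
          simpa using this.1
      rw [starOutcome_center Δ _ hall]
      simp
  · intro t
    by_cases hex : ∃ j : Fin Δ, (hs t j.succ || hs t 0) = true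
    · simp only [hu, hy, dif_pos hex]
      have : (Finset.univ.filter
          (fun i => starExpertOutcome Δ i hex.choose.succ ≠ false)) = {hex.choose} := by
        ext i
        simp [starExpert_leaf]
      rw [this]; simp
    · simp only [hu, hy, dif_neg hex]
      have : (Finset.univ.filter
          (fun i : Fin Δ => starExpertOutcome Δ i 0 ≠ true)) = ∅ := by
        ext i
        simp [starExpert_center]
      rw [this]; simp
  · -- counting argument
    have hrow : ∀ t, ((Finset.univ : Finset (Fin Δ)).filter
        (fun i => starExpertOutcome Δ i (u t) ≠ y t)).card ≤ 1 := by
      intro t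
      by_cases hex : ∃ j : Fin Δ, (hs t j.succ || hs t 0) = true
      · simp only [hu, hy, dif_pos hex]
        have : (Finset.univ.filter
            (fun i => starExpertOutcome Δ i hex.choose.succ ≠ false)) = {hex.choose} := by
          ext i
          simp [starExpert_leaf]
        rw [this]; simp
      · simp only [hu, hy, dif_neg hex]
        have : (Finset.univ.filter
            (fun i : Fin Δ => starExpertOutcome Δ i 0 ≠ true)) = ∅ := by
          ext i
          simp [starExpert_center]
        rw [this]; simp
    have hsum : ∑ i : Fin Δ, ((Finset.univ : Finset (Fin T)).filter
        (fun t => starExpertOutcome Δ i (u t) ≠ y t)).card ≤ T := by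
      calc ∑ i : Fin Δ, ((Finset.univ : Finset (Fin T)).filter
            (fun t => starExpertOutcome Δ i (u t) ≠ y t)).card
          = ∑ i : Fin Δ, ∑ t : Fin T,
            (if starExpertOutcome Δ i (u t) ≠ y t then 1 else 0) := by
            simp [Finset.card_filter]
        _ = ∑ t : Fin T, ∑ i : Fin Δ,
            (if starExpertOutcome Δ i (u t) ≠ y t then 1 else 0) := Finset.sum_comm
        _ = ∑ t : Fin T, ((Finset.univ : Finset (Fin Δ)).filter
            (fun i => starExpertOutcome Δ i (u t) ≠ y t)).card := by
            simp [Finset.card_filter]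
        _ ≤ ∑ _t : Fin T, 1 := Finset.sum_le_sum (fun t _ => hrow t)
        _ = T := by simp
    by_contra hc
    push_neg at hc
    have : ∑ _i : Fin Δ, (T + 1) ≤ Δ * ∑ i : Fin Δ, ((Finset.univ : Finset (Fin T)).filter
        (fun t => starExpertOutcome Δ i (u t) ≠ y t)).card := by
      rw [Finset.mul_sum]
      apply Finset.sum_le_sum
      intro i _
      exact hc i
    simp only [Finset.sum_const, Finset.card_univ, Fintype.card_fin, smul_eq_mul] at this
    have h2 : Δ * (T + 1) ≤ Δ * T :=
      this.trans (Nat.mul_le_mul_left Δ hsum)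
    have := Nat.le_of_mul_le_mul_left h2 hΔpos
    omega
end

section
/- In the star graph with Δ ≥ 2 leaves and hypothesis set {h¹,…,h^Δ} (hⁱ positive only at leaf xᵢ), for every fractional classifier P : X → [0,1] there exists an agent (u,y) such that, when the agent moves to the node in its closed neighborhood maximizing P (free-edges cost), the learner's expected loss is at least 1/2 while at most one expert misclassifies (u,y) under its own best response. -/
/-- Fractional lower bound in the free-edges model: in the star graph with `Δ ≥ 2`
leaves and experts `h¹,…,h^Δ` (where `hⁱ` labels only leaf `i` positive), for every
fractional classifier `P : X → [0,1]` there exists an agent `(u, y)` such that, for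
any node `v` of the closed neighborhood of `u` maximizing `P` there (the agent's
best response under free edges), the learner's expected loss (`P v` if `y = −1`,
`1 − P v` if `y = +1`) is at least `1/2`, while at most one expert misclassifies
`(u, y)` under its own best response. -/
theorem fractional_free_edges_lower_bound (Δ : ℕ) (hΔ : 2 ≤ Δ)
    (P : Fin (Δ + 1) → ℝ) (hP : ∀ v, P v ∈ Set.Icc (0 : ℝ) 1) :
    ∃ (u : Fin (Δ + 1)) (y : Bool),
      (∀ v, starNbr Δ u v = true → (∀ w, starNbr Δ u w = true → P w ≤ P v) →
        (1 : ℝ) / 2 ≤ (if y then 1 - P v else P v)) ∧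
      ((Finset.univ : Finset (Fin Δ)).filter
        (fun i => starNbr Δ u i.succ ≠ y)).card ≤ 1 := by
  by_cases h : ∃ v, (1 : ℝ) / 2 ≤ P v
  · obtain ⟨v₀, hv₀⟩ := h
    set u : Fin (Δ + 1) := if v₀ = 0 then ⟨1, by omega⟩ else v₀ with hu
    have hu0 : u ≠ 0 := by
      by_cases hc : v₀ = 0 <;> simp [hu, hc, Fin.ext_iff]
    have hmem : starNbr Δ u v₀ = true := by
      by_cases hc : v₀ = 0 <;> simp [starNbr, hu, hc]
    refine ⟨u, false, ?_, ?_⟩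
    · intro v hv hmax
      have := hmax v₀ hmem
      simp only [Bool.false_eq_true, if_false]
      linarith
    · rw [Finset.card_le_one]
      intro a ha b hb
      simp only [Finset.mem_filter, Finset.mem_univ, true_and, ne_eq,
        Bool.not_eq_false, starNbr, Bool.or_eq_true, beq_iff_eq] at ha hb
      have ha' : u = a.succ := by
        rcases ha with (h1 | h1) | h1
        · exact h1
        · exact absurd h1 hu0
        · exact absurd h1 (Fin.succ_ne_zero a)
      have hb' : u = b.succ := by
        rcases hb with (h1 | h1) | h1
        · exact h1
        · exact absurd h1 hu0
        · exact absurd h1 (Fin.succ_ne_zero b)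
      exact Fin.succ_injective _ (ha'.symm.trans hb')
  · push_neg at h
    refine ⟨0, true, ?_, ?_⟩
    · intro v hv hmax
      simp only [if_true]
      linarith [h v]
    · simp [starNbr]
end

section
/- In the star graph with uniform edge weight w = 1/2 + ε (ε > 0 small) and Δ ≥ 2 leaves, for every fractional classifier P : X → [0,1] there exists an agent (u,y) such that the learner's expected loss under the agent's best response (maximizing P(v) − cost(u,v) with shortest-path costs) is at least 1/4 − ε/2, while at most one of the experts h¹,…,h^Δ errs on (u,y). -/
/-- Shortest-path cost in the star graph with uniform edge weight `w`:
`0` between a node and itself, `w` between the center and a leaf, `2w` between two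
distinct leaves. -/
noncomputable def starCost (Δ : ℕ) (w : ℝ) (u v : Fin (Δ + 1)) : ℝ :=
  if u = v then 0 else if u = 0 ∨ v = 0 then w else 2 * w

lemma starCost_nonneg (Δ : ℕ) (w : ℝ) (hw : 0 ≤ w) (u v : Fin (Δ + 1)) :
    0 ≤ starCost Δ w u v := by
  unfold starCost
  split_ifs <;> nlinarith

lemma leaf_card (Δ : ℕ) (j : Fin Δ) :
    ((Finset.univ : Finset (Fin Δ)).filter
        (fun i => decide ((j.succ : Fin (Δ+1)) = i.succ ∨ (j.succ : Fin (Δ+1)) = 0) ≠ false)).card ≤ 1 := by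
  have : ((Finset.univ : Finset (Fin Δ)).filter
        (fun i => decide ((j.succ : Fin (Δ+1)) = i.succ ∨ (j.succ : Fin (Δ+1)) = 0) ≠ false))
      = {j} := by
    ext i
    simp [Fin.succ_inj, Fin.succ_ne_zero, eq_comm]
  rw [this]
  simp

/-- Fractional lower bound on weighted star graphs: with uniform edge weight
`w = 1/2 + ε` (for small `ε > 0`) and `Δ ≥ 2` leaves, for every fractional
classifier `P : X → [0,1]` there exists an agent `(u, y)` such that for every best
response `v` (maximizing `P v − cost(u,v)`), the learner's expected loss is at least
`1/4 − ε/2`, while at most one of the experts `h¹,…,h^Δ` (where `hⁱ` labels only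
leaf `i` positive, and an agent can reach leaf `i` under `hⁱ` iff it starts at
leaf `i` or at the center) errs on `(u, y)`. -/
theorem fractional_weighted_lower_bound (Δ : ℕ) (hΔ : 2 ≤ Δ)
    (ε : ℝ) (hε0 : 0 < ε) (hε1 : ε < 1 / 2)
    (P : Fin (Δ + 1) → ℝ) (hP : ∀ v, P v ∈ Set.Icc (0 : ℝ) 1) :
    ∃ (u : Fin (Δ + 1)) (y : Bool),
      (∀ v : Fin (Δ + 1),
        (∀ v' : Fin (Δ + 1),
          P v' - starCost Δ (1 / 2 + ε) u v' ≤ P v - starCost Δ (1 / 2 + ε) u v) →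
        (1 : ℝ) / 4 - ε / 2 ≤ (if y then 1 - P v else P v)) ∧
      ((Finset.univ : Finset (Fin Δ)).filter
        (fun i => decide (u = i.succ ∨ u = 0) ≠ y)).card ≤ 1 := by
  have hw : (0:ℝ) ≤ 1/2 + ε := by linarith
  by_cases h1 : ∃ i : Fin Δ, (1:ℝ)/4 - ε/2 ≤ P i.succ
  · -- pick that leaf with y = false
    obtain ⟨i, hi⟩ := h1
    refine ⟨i.succ, false, ?_, leaf_card Δ i⟩
    intro v hv
    have h := hv i.succ
    have hc0 : starCost Δ (1/2+ε) i.succ i.succ = 0 := by simp [starCost]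
    have hcv := starCost_nonneg Δ (1/2+ε) hw i.succ v
    simp only [if_neg Bool.false_ne_true, Bool.cond_false] at *
    linarith
  · push_neg at h1
    by_cases h2 : P 0 ≤ 3/4 + ε/2
    · -- center, y = true
      refine ⟨0, true, ?_, ?_⟩
      · intro v _
        simp only [if_pos]
        rcases eq_or_ne v 0 with rfl | hv0
        · linarith
        · obtain ⟨j, rfl⟩ := Fin.exists_succ_eq.2 hv0
          have := h1 j
          linarith
      · have : ((Finset.univ : Finset (Fin Δ)).filter
            (fun i => decide ((0 : Fin (Δ+1)) = i.succ ∨ (0 : Fin (Δ+1)) = 0) ≠ true)) = ∅ := by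
          ext i; simp [(Fin.succ_ne_zero i).symm]
        simp [this]
    · -- far case: P 0 large; leaf, y = false
      push_neg at h2
      have hΔ0 : 0 < Δ := by omega
      set j : Fin Δ := ⟨0, hΔ0⟩
      refine ⟨j.succ, false, ?_, leaf_card Δ j⟩
      intro v hv
      have h := hv 0
      have hc0 : starCost Δ (1/2+ε) j.succ 0 = 1/2 + ε := by
        simp [starCost, Fin.succ_ne_zero]
      have hcv := starCost_nonneg Δ (1/2+ε) hw j.succ v
      simp only [if_neg Bool.false_ne_true] at *
      linarith
end

section
/- For the Perceptron algorithm run on examples (z_j, y_j) with ‖z_j‖ ≤ R, for any weight vector w*, the number of mistakes is at most R²‖w*‖² + 2·Σ_j max{0, 1 − y_j⟨z_j, w*⟩}. -/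
/-!
Two potentials are tracked along the run. Each mistake increases `‖w‖²` by at most `R²`,
because the cross term `2 y ⟪w, z⟫` is nonpositive exactly on mistakes, so after `M` mistakes
`‖w‖ ≤ √M R`. Each mistake increases `⟪w, w*⟫` by `y ⟪z, w*⟫ ≥ 1 - hinge`, so
`M - L ≤ ⟪w, w*⟫ ≤ √M R ‖w*‖`, where `L` is the total hinge loss. Solving this quadratic
inequality in `√M` gives `M ≤ R² ‖w*‖² + 2 L`.
-/

open Finset RealInnerProductSpace

theorem le_mul_sq_add_two_mul_of_sub_le_mul {m l a b c : ℝ} (hl : 0 ≤ l) (ha : 0 ≤ a)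
    (hbm : b ^ 2 ≤ m * a) (h : m - l ≤ b * c) : m ≤ a * c ^ 2 + 2 * l := by
  by_contra! hlt
  have hml : 0 ≤ m - l := by nlinarith [mul_nonneg ha (sq_nonneg c)]
  have hsq : (m - l) ^ 2 ≤ m * a * c ^ 2 :=
    calc (m - l) ^ 2 ≤ (b * c) ^ 2 := pow_le_pow_left₀ hml h 2
      _ = b ^ 2 * c ^ 2 := mul_pow b c 2
      _ ≤ m * a * c ^ 2 := mul_le_mul_of_nonneg_right hbm (sq_nonneg c)
  nlinarith [mul_nonneg ha (sq_nonneg c)]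

section PerceptronStep

variable {E : Type*} [NormedAddCommGroup E] [InnerProductSpace ℝ E]
  {w w' z : E} {y : ℝ}

theorem norm_sq_perceptron_step_le
    (hw' : w' = if y * ⟪w, z⟫ ≤ 0 then w + y • z else w) (hy : y ^ 2 ≤ 1) :
    ‖w'‖ ^ 2 - ‖w‖ ^ 2 ≤ if y * ⟪w, z⟫ ≤ 0 then ‖z‖ ^ 2 else 0 := by
  split_ifs at hw' ⊢
  · have hexp : ‖w + y • z‖ ^ 2 = ‖w‖ ^ 2 + 2 * (y * ⟪w, z⟫) + y ^ 2 * ‖z‖ ^ 2 := by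
      rw [norm_add_sq_real, real_inner_smul_right, norm_smul, mul_pow, Real.norm_eq_abs, sq_abs]
    rw [hw', hexp]
    nlinarith [sq_nonneg ‖z‖]
  · rw [hw', sub_self]

theorem sub_hinge_le_inner_perceptron_step (u : E)
    (hw' : w' = if y * ⟪w, z⟫ ≤ 0 then w + y • z else w) :
    ((if y * ⟪w, z⟫ ≤ 0 then 1 else 0) - max 0 (1 - y * ⟪z, u⟫)) ≤ ⟪w', u⟫ - ⟪w, u⟫ := by
  have hhinge := le_max_right 0 (1 - y * ⟪z, u⟫)
  split_ifs at hw' ⊢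
  · rw [hw', inner_add_left, real_inner_smul_left]
    linarith
  · rw [hw', sub_self, zero_sub, neg_nonpos]
    exact le_max_left _ _

end PerceptronStep

/-- Non-separable Perceptron mistake bound (Block, 1962): running the Perceptron on
examples `(z j, y j)` with `‖z j‖ ≤ R` and labels `y j ∈ {−1, +1}` (starting at
`w 0 = 0`, updating `w (j+1) = w j + y j • z j` exactly on mistakes, where a
mistake at step `j` means `y j ⟪w j, z j⟫ ≤ 0`), for any comparator `w*` the number
of mistakes among the first `n` steps is at most
`R² ‖w*‖² + 2 Σ_j max {0, 1 − y j ⟪z j, w*⟫}`. -/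
theorem perceptron_hinge_loss_bound
    {E : Type*} [NormedAddCommGroup E] [InnerProductSpace ℝ E]
    (z : ℕ → E) (y : ℕ → ℝ) (R : ℝ) (n : ℕ) (w : ℕ → E) (wstar : E)
    (hz : ∀ j, ‖z j‖ ≤ R)
    (hy : ∀ j, y j = 1 ∨ y j = -1)
    (hw0 : w 0 = 0)
    (hupd : ∀ j, w (j + 1) =
      if y j * (inner ℝ (w j) (z j) : ℝ) ≤ 0 then w j + y j • z j else w j) :
    (((Finset.range n).filter (fun j => y j * (inner ℝ (w j) (z j) : ℝ) ≤ 0)).card : ℝ)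
      ≤ R ^ 2 * ‖wstar‖ ^ 2 +
        2 * ∑ j ∈ Finset.range n, max 0 (1 - y j * (inner ℝ (z j) wstar : ℝ)) := by
  have hy2 (j : ℕ) : y j ^ 2 ≤ 1 := by rcases hy j with h | h <;> simp [h]
  have hz2 (j : ℕ) : ‖z j‖ ^ 2 ≤ R ^ 2 := pow_le_pow_left₀ (norm_nonneg _) (hz j) 2
  have hnorm : ‖w n‖ ^ 2 ≤ #{j ∈ range n | y j * ⟪w j, z j⟫ ≤ 0} * R ^ 2 := by
    have hsteps := sum_le_sum fun j (_ : j ∈ range n) =>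
      norm_sq_perceptron_step_le (hupd j) (hy2 j)
    rw [sum_range_sub (fun j => ‖w j‖ ^ 2), hw0, norm_zero, zero_pow two_ne_zero,
      sub_zero] at hsteps
    rw [natCast_card_filter, sum_mul]
    exact hsteps.trans (sum_le_sum fun j _ => by split_ifs <;> simp [hz2 j])
  have hinner := sum_le_sum fun j (_ : j ∈ range n) =>
    sub_hinge_le_inner_perceptron_step wstar (hupd j)
  rw [sum_range_sub (fun j => ⟪w j, wstar⟫), sum_sub_distrib, ← natCast_card_filter, hw0,
    inner_zero_left, sub_zero] at hinner
  exact le_mul_sq_add_two_mul_of_sub_le_mul (sum_nonneg fun _ _ => le_max_left _ _)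
    (sq_nonneg R) hnorm (hinner.trans (real_inner_le_norm _ _))
end

section
/- If E[ln(W_{t+1}/W_t) | mistake at t] ≤ ln(1 − λθ) with θ = max{1/(Δ+1+1/β), 1/(Δ²+2)}, W starts at H ≥ 1 and satisfies E[ln W_T] ≥ OPT·ln γ with γ = λ = 1/e, then E[Mistakes] ≤ e·min{Δ+1+1/β, Δ²+2}·(ln H + E[OPT]). -/
/-- Two-populations mistake bound: if the expected number of mistakes `M` satisfies
the weight-telescoping inequality
`OPT·ln γ − ln H ≤ M·ln(1 − λθ)` with `γ = λ = 1/e` and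
`θ = max {1/(Δ+1+1/β), 1/(Δ²+2)}`, then
`M ≤ e · min {Δ+1+1/β, Δ²+2} · (ln H + OPT)`. -/
theorem two_population_mistake_bound (β Δ H M OPT : ℝ)
    (hβ0 : 0 < β) (hβ1 : β ≤ 1) (hΔ : 1 ≤ Δ) (hH : 1 ≤ H)
    (hM : 0 ≤ M) (hOPT : 0 ≤ OPT)
    (h : OPT * Real.log (Real.exp (-1)) - Real.log H ≤
      M * Real.log (1 - Real.exp (-1) *
        max (1 / (Δ + 1 + 1 / β)) (1 / (Δ ^ 2 + 2)))) :
    M ≤ Real.exp 1 * min (Δ + 1 + 1 / β) (Δ ^ 2 + 2) * (Real.log H + OPT) := by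
  set a := Δ + 1 + 1 / β with ha
  set b := Δ ^ 2 + 2 with hb
  have ha0 : 0 < a := by positivity
  have hb0 : 0 < b := by positivity
  set θ := max (1 / a) (1 / b) with hθ
  have hθ0 : 0 < θ := lt_max_of_lt_left (by positivity)
  have hθ1 : θ ≤ 1 := by
    apply max_le
    · rw [div_le_one ha0]; have h1 : 0 < 1 / β := by positivity
      show (1:ℝ) ≤ Δ + 1 + 1 / β
      linarith
    · rw [div_le_one hb0]
      show (1:ℝ) ≤ Δ ^ 2 + 2
      nlinarith
  have he1 : Real.exp (-1) < 1 := by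
    rw [Real.exp_lt_one_iff]; norm_num
  have he0 : 0 < Real.exp (-1) := Real.exp_pos _
  have hx1 : Real.exp (-1) * θ < 1 :=
    lt_of_le_of_lt (by nlinarith) he1
  have hxpos : 0 < 1 - Real.exp (-1) * θ := by linarith
  -- log (1 - x) ≤ -x
  have hlog : Real.log (1 - Real.exp (-1) * θ) ≤ -(Real.exp (-1) * θ) := by
    have := Real.log_le_sub_one_of_pos hxpos
    linarith
  have hlogexp : Real.log (Real.exp (-1)) = -1 := Real.log_exp _
  have key : M * (Real.exp (-1) * θ) ≤ Real.log H + OPT := by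
    have h2 : M * Real.log (1 - Real.exp (-1) * θ) ≤ M * (-(Real.exp (-1) * θ)) :=
      mul_le_mul_of_nonneg_left hlog hM
    rw [hlogexp] at h
    nlinarith
  -- 1/θ = min a b
  have hmin : min a b = 1 / θ := by
    rcases le_total a b with hab | hab
    · have h1 : 1 / b ≤ 1 / a := one_div_le_one_div_of_le ha0 hab
      rw [hθ, min_eq_left hab, max_eq_left h1, one_div_one_div]
    · have h1 : 1 / a ≤ 1 / b := one_div_le_one_div_of_le hb0 hab
      rw [hθ, min_eq_right hab, max_eq_right h1, one_div_one_div]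
  have hee : Real.exp (-1) * Real.exp 1 = 1 := by
    rw [← Real.exp_add]; norm_num
  have hmt : M * θ ≤ Real.exp 1 * (Real.log H + OPT) := by
    calc M * θ = Real.exp 1 * (M * (Real.exp (-1) * θ)) := by
          rw [show Real.exp 1 * (M * (Real.exp (-1) * θ))
              = M * θ * (Real.exp (-1) * Real.exp 1) from by ring, hee, mul_one]
      _ ≤ Real.exp 1 * (Real.log H + OPT) :=
          mul_le_mul_of_nonneg_left key (Real.exp_pos 1).le
  have hd : M ≤ Real.exp 1 * (Real.log H + OPT) / θ := (le_div_iff₀ hθ0).2 hmt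
  have heq : Real.exp 1 * (1 / θ) * (Real.log H + OPT)
      = Real.exp 1 * (Real.log H + OPT) / θ := by ring
  rw [hmin, heq]
  exact hd
end
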